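/- arXiv:2401.03776 — 2 statements merged into one kernel-verified Lean document; each statement's English description precedes it below -/
import Mathlib

section
/- Let p, q : ℝ → ℝ be measurable with sup_{x ≤ z₀} (1+x²)^α |p(x) − q(x)| = C < ∞ for some α > 1 and z₀ ∈ ℝ, and suppose p, q are integrable on rays (−∞, ζ]. Then for any σ > 0 and any ε ∈ (0, 2α − 2), the quantity ∫_{-∞}^{z} ∫_{-∞}^{ζ} |p(x) − q(x)| dx · e^{σζ} dζ is bounded, uniformly over z ≤ z₀, by e^{σz₀} · C · K_ε · ∫_{-∞}^{z₀} (∫_{-∞}^{ζ} (1+x²)^{-(2α − 1/2 − ε)} dx)^{1/2} dζ, where K_ε = (√π Γ(ε)/Γ(ε + 1/2))^{1/2}, and this last iterated integral is finite. -/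
/-!
Write `|p - q| = (1 + x²)^(-γ) · (1 + x²)^γ |p - q|` with `γ = α - 1/4 - ε/2`. By Cauchy–Schwarz
the inner integral over `(-∞, ζ]` is at most `(∫_{-∞}^ζ (1 + x²)^(-(2α - 1/2 - ε)))^{1/2}` times
`C (∫_ℝ (1 + x²)^(-(1/2 + ε)))^{1/2}`, and the last integral is the Beta integral
`B(1/2, ε) = √π Γ(ε) / Γ(ε + 1/2)` after substituting `t = x² / (1 + x²)`. Bounding `e^{σζ}` by
`e^{σz₀}` and enlarging the outer domain to `(-∞, z₀]` gives the estimate. The outer integral is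
finite because `∫_{-∞}^ζ (1 + x²)^(-β)` decays like `|ζ|^{1 - 2β}` as `ζ → -∞`, and
`β = 2α - 1/2 - ε > 3/2`.
-/

open MeasureTheory Set Real

theorem integrable_one_add_sq_rpow_neg {s : ℝ} (hs : 1 / 2 < s) :
    Integrable (fun x : ℝ => (1 + x ^ 2) ^ (-s)) := by
  have h := integrable_rpow_neg_one_add_norm_sq (E := ℝ) (μ := volume) (r := 2 * s)
    (by simp; linarith)
  simpa [norm_eq_abs, sq_abs, neg_div] using h

theorem integral_Ioo_rpow_mul_one_sub_rpow {a b : ℝ} (ha : 0 < a) (hb : 0 < b) :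
    ∫ t in Ioo (0 : ℝ) 1, t ^ (a - 1) * (1 - t) ^ (b - 1)
      = Gamma a * Gamma b / Gamma (a + b) := by
  have hB := Complex.Gamma_mul_Gamma_eq_betaIntegral (s := a) (t := b)
    (by simpa using ha) (by simpa using hb)
  have hbeta : Complex.betaIntegral a b
      = ((∫ t in Ioo (0 : ℝ) 1, t ^ (a - 1) * (1 - t) ^ (b - 1) : ℝ) : ℂ) := by
    rw [Complex.betaIntegral, intervalIntegral.integral_of_le zero_le_one,
      integral_Ioc_eq_integral_Ioo, ← integral_complex_ofReal]
    refine setIntegral_congr_fun measurableSet_Ioo fun t ⟨ht0, ht1⟩ => ?_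
    rw [Complex.ofReal_mul, Complex.ofReal_cpow ht0.le, Complex.ofReal_cpow (by linarith)]
    push_cast
    rfl
  rw [hbeta, ← Complex.ofReal_add, Complex.Gamma_ofReal, Complex.Gamma_ofReal,
    Complex.Gamma_ofReal, ← Complex.ofReal_mul, ← Complex.ofReal_mul] at hB
  rw [eq_div_iff (Real.Gamma_pos_of_pos (add_pos ha hb)).ne', mul_comm]
  exact_mod_cast hB.symm

theorem integral_Ioi_one_add_sq_rpow_neg_eq_betaIntegral (ε : ℝ) :
    ∫ x in Ioi (0 : ℝ), 2 * (1 + x ^ 2) ^ (-(1 / 2 + ε))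
      = ∫ t in Ioo (0 : ℝ) 1, t ^ (1 / 2 - 1 : ℝ) * (1 - t) ^ (ε - 1) := by
  -- the substitution `t = x² / (1 + x²)`
  set φ : ℝ → ℝ := fun x => 1 - (1 + x ^ 2)⁻¹
  have hw : ∀ x : ℝ, 0 < 1 + x ^ 2 := fun x => by positivity
  have hφ_mono : StrictMonoOn φ (Ioi 0) := fun x hx y _ hxy => by
    have : 1 + x ^ 2 < 1 + y ^ 2 := by nlinarith [mem_Ioi.mp hx]
    simpa [φ] using inv_strictAnti₀ (hw x) this
  have hφ_image : φ '' Ioi 0 = Ioo 0 1 := by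
    ext t
    constructor
    · rintro ⟨x, hx, rfl⟩
      have : 1 < 1 + x ^ 2 := by nlinarith [mem_Ioi.mp hx]
      exact ⟨by simpa [φ] using inv_lt_one_of_one_lt₀ this, by simp [φ, hw x]⟩
    · rintro ⟨ht0, ht1⟩
      have h1t : 0 < 1 - t := by linarith
      refine ⟨√(t / (1 - t)), sqrt_pos.mpr (div_pos ht0 h1t), ?_⟩
      simp only [φ, sq_sqrt (div_pos ht0 h1t).le]
      field_simp
      ring
  have hφ_deriv : ∀ x ∈ Ioi (0 : ℝ), HasDerivWithinAt φ (2 * x / (1 + x ^ 2) ^ 2) (Ioi 0) x :=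
    fun x _ => by
      have h : HasDerivAt φ (-(-(2 * x) / (1 + x ^ 2) ^ 2)) x := by
        simpa using (((hasDerivAt_pow 2 x).const_add 1).inv (hw x).ne').const_sub 1
      exact (h.congr_deriv (by ring)).hasDerivWithinAt
  rw [← hφ_image, integral_image_eq_integral_abs_deriv_smul measurableSet_Ioi hφ_deriv
    hφ_mono.injOn]
  refine setIntegral_congr_fun measurableSet_Ioi fun x (hx : 0 < x) => ?_
  have hφx : φ x = x ^ 2 * (1 + x ^ 2)⁻¹ := by
    simp only [φ]; field_simp; ring
  have hφx' : 1 - φ x = (1 + x ^ 2)⁻¹ := by simp [φ]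
  set w := 1 + x ^ 2
  have hw0 : 0 < w := hw x
  have e1 : (x ^ 2 * w⁻¹) ^ (1 / 2 - 1 : ℝ) = x⁻¹ * w ^ (1 / 2 : ℝ) := by
    rw [mul_rpow (sq_nonneg x) (inv_nonneg.mpr hw0.le), inv_rpow hw0.le,
      ← rpow_natCast x 2, ← rpow_mul hx.le, ← rpow_neg hw0.le]
    norm_num [rpow_neg_one]
  have e2 : w⁻¹ ^ (ε - 1) = w ^ (1 - ε) := by
    rw [inv_rpow hw0.le, ← rpow_neg hw0.le, neg_sub]
  have e3 : w ^ (-(1 / 2 + ε)) = w ^ (1 / 2 : ℝ) * w ^ (1 - ε) / w ^ 2 := by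
    rw [← rpow_add hw0, ← rpow_natCast, ← rpow_sub hw0]
    norm_num
    ring_nf
  rw [smul_eq_mul, hφx', hφx, abs_of_pos (by positivity), e1, e2, e3]
  field_simp

theorem integral_one_add_sq_rpow_neg {ε : ℝ} (hε : 0 < ε) :
    ∫ x : ℝ, (1 + x ^ 2) ^ (-(1 / 2 + ε))
      = √π * Gamma ε / Gamma (ε + 1 / 2) := by
  have h_even : ∫ x : ℝ, (1 + x ^ 2) ^ (-(1 / 2 + ε))
      = ∫ x in Ioi (0 : ℝ), 2 * (1 + x ^ 2) ^ (-(1 / 2 + ε)) := by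
    rw [integral_const_mul, ← integral_comp_abs (f := fun x => (1 + x ^ 2) ^ (-(1 / 2 + ε)))]
    simp [sq_abs]
  rw [h_even, integral_Ioi_one_add_sq_rpow_neg_eq_betaIntegral,
    integral_Ioo_rpow_mul_one_sub_rpow one_half_pos hε, Real.Gamma_one_half_eq, add_comm]

theorem one_add_sq_rpow_neg_le_mul {β δ x ζ : ℝ} (hδβ : δ ≤ β) (hxζ : x ≤ ζ) (hζ : ζ ≤ 0) :
    (1 + x ^ 2) ^ (-β) ≤ (1 + ζ ^ 2) ^ (-(β - δ)) * (1 + x ^ 2) ^ (-δ) := by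
  have hsq : 1 + ζ ^ 2 ≤ 1 + x ^ 2 := by nlinarith
  calc (1 + x ^ 2) ^ (-β) = (1 + x ^ 2) ^ (-(β - δ)) * (1 + x ^ 2) ^ (-δ) := by
        rw [← rpow_add (by positivity)]; ring_nf
    _ ≤ (1 + ζ ^ 2) ^ (-(β - δ)) * (1 + x ^ 2) ^ (-δ) :=
        mul_le_mul_of_nonneg_right (rpow_le_rpow_of_nonpos (by positivity) hsq (by linarith))
          (by positivity)

theorem integral_Iic_one_add_sq_rpow_neg_le {β δ ζ : ℝ} (hδ : 1 / 2 < δ) (hδβ : δ ≤ β)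
    (hζ : ζ ≤ 0) :
    ∫ x in Iic ζ, (1 + x ^ 2) ^ (-β) ≤ (1 + ζ ^ 2) ^ (-(β - δ)) * ∫ x, (1 + x ^ 2) ^ (-δ) := by
  have hint := integrable_one_add_sq_rpow_neg hδ
  calc ∫ x in Iic ζ, (1 + x ^ 2) ^ (-β)
      ≤ ∫ x in Iic ζ, (1 + ζ ^ 2) ^ (-(β - δ)) * (1 + x ^ 2) ^ (-δ) :=
        setIntegral_mono_on (integrable_one_add_sq_rpow_neg (by linarith)).integrableOn
          (hint.integrableOn.const_mul _) measurableSet_Iic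
          fun x hx => one_add_sq_rpow_neg_le_mul hδβ hx hζ
    _ ≤ (1 + ζ ^ 2) ^ (-(β - δ)) * ∫ x, (1 + x ^ 2) ^ (-δ) := by
        rw [integral_const_mul]
        exact mul_le_mul_of_nonneg_left
          (setIntegral_le_integral hint (.of_forall fun x => by positivity)) (by positivity)

theorem integrableOn_sqrt_integral_Iic_one_add_sq_rpow_neg {β : ℝ} (hβ : 3 / 2 < β) (z₀ : ℝ) :
    IntegrableOn (fun ζ => √(∫ x in Iic ζ, (1 + x ^ 2) ^ (-β))) (Iic z₀) := by
  have hint := integrable_one_add_sq_rpow_neg (s := β) (by linarith)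
  have hmono : Monotone fun ζ => √(∫ x in Iic ζ, (1 + x ^ 2) ^ (-β)) := fun a b hab =>
    sqrt_le_sqrt <| setIntegral_mono_set hint.integrableOn (.of_forall fun x => by positivity)
      (Iic_subset_Iic.mpr hab).eventuallyLE
  -- `δ` is chosen so that both `(1 + x²)^(-δ)` and `(1 + ζ²)^(-(β - δ)/2)` are integrable
  set δ := β / 2 - 1 / 4 with hδ
  set I := ∫ x : ℝ, (1 + x ^ 2) ^ (-δ)
  have hleft : IntegrableOn (fun ζ => √(∫ x in Iic ζ, (1 + x ^ 2) ^ (-β))) (Iic 0) := by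
    refine ((integrable_one_add_sq_rpow_neg (s := (β - δ) / 2) (by linarith)).integrableOn.const_mul
      √I).mono' hmono.measurable.aestronglyMeasurable ?_
    refine (ae_restrict_iff' measurableSet_Iic).mpr (.of_forall fun ζ (hζ : ζ ≤ 0) => ?_)
    rw [Real.norm_of_nonneg (sqrt_nonneg _)]
    calc √(∫ x in Iic ζ, (1 + x ^ 2) ^ (-β)) ≤ √((1 + ζ ^ 2) ^ (-(β - δ)) * I) :=
          sqrt_le_sqrt (integral_Iic_one_add_sq_rpow_neg_le (by linarith) (by linarith) hζ)
      _ = √I * (1 + ζ ^ 2) ^ (-((β - δ) / 2)) := by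
          rw [sqrt_mul (by positivity), mul_comm, sqrt_eq_rpow ((1 + ζ ^ 2) ^ _),
            ← rpow_mul (by positivity)]
          ring_nf
  have hright : IntegrableOn _ (Icc 0 z₀) :=
    MonotoneOn.integrableOn_isCompact isCompact_Icc (hmono.monotoneOn _)
  exact (hleft.union hright).mono_set Iic_subset_Iic_union_Icc

theorem integral_mul_le_sqrt_mul_sqrt {α : Type*} [MeasurableSpace α] {μ : Measure α}
    {f g : α → ℝ} (hf_nonneg : 0 ≤ᵐ[μ] f) (hg_nonneg : 0 ≤ᵐ[μ] g)
    (hf : MemLp f 2 μ) (hg : MemLp g 2 μ) :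
    ∫ a, f a * g a ∂μ ≤ √(∫ a, f a ^ 2 ∂μ) * √(∫ a, g a ^ 2 ∂μ) := by
  have h := integral_mul_le_Lp_mul_Lq_of_nonneg Real.HolderConjugate.two_two hf_nonneg hg_nonneg
    (by simpa using hf) (by simpa using hg)
  simpa only [rpow_two, sqrt_eq_rpow, one_div] using h

theorem setIntegral_abs_le_of_rpow_mul_abs_le {f : ℝ → ℝ} {s : Set ℝ} (hs : MeasurableSet s)
    (hf : AEStronglyMeasurable f (volume.restrict s)) {α C ε : ℝ} (hC : 0 ≤ C) (hε : 0 < ε)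
    (hεα : ε < 2 * α - 1) (hfC : ∀ x ∈ s, (1 + x ^ 2) ^ α * |f x| ≤ C) :
    ∫ x in s, |f x| ≤ √(∫ x in s, (1 + x ^ 2) ^ (-(2 * α - 1 / 2 - ε))) *
      (C * √(√π * Gamma ε / Gamma (ε + 1 / 2))) := by
  set γ := α - 1 / 4 - ε / 2
  set u : ℝ → ℝ := fun x => (1 + x ^ 2) ^ (-γ)
  set v : ℝ → ℝ := fun x => (1 + x ^ 2) ^ γ * |f x|
  have hw : ∀ x : ℝ, 0 < 1 + x ^ 2 := fun x => by positivity
  have huv : ∀ x, u x * v x = |f x| := fun x => by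
    rw [← mul_assoc, ← rpow_add (hw x), neg_add_cancel, rpow_zero, one_mul]
  have hu_sq : ∀ x, u x ^ 2 = (1 + x ^ 2) ^ (-(2 * α - 1 / 2 - ε)) := fun x => by
    rw [← rpow_mul_natCast (hw x).le]
    congr 1
    push_cast
    ring
  have hv_sq : ∀ x ∈ s, v x ^ 2 ≤ C ^ 2 * (1 + x ^ 2) ^ (-(1 / 2 + ε)) := fun x hx => by
    have hsplit : ((1 + x ^ 2) ^ γ) ^ 2 = (1 + x ^ 2) ^ (-(1 / 2 + ε)) * ((1 + x ^ 2) ^ α) ^ 2 := by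
      rw [← rpow_mul_natCast (hw x).le, ← rpow_mul_natCast (hw x).le, ← rpow_add (hw x)]
      congr 1
      push_cast
      ring
    rw [mul_pow, hsplit, mul_assoc, ← mul_pow, mul_comm]
    exact mul_le_mul_of_nonneg_right (pow_le_pow_left₀ (by positivity) (hfC x hx) 2)
      (by positivity)
  have hu : MemLp u 2 (volume.restrict s) := by
    refine (memLp_two_iff_integrable_sq (by fun_prop)).mpr ?_
    simp_rw [hu_sq]
    exact (integrable_one_add_sq_rpow_neg (by linarith)).integrableOn
  have hbound_int : IntegrableOn (fun x => C ^ 2 * (1 + x ^ 2) ^ (-(1 / 2 + ε))) s :=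
    (integrable_one_add_sq_rpow_neg (by linarith)).integrableOn.const_mul _
  have hv_sq_le : ∀ᵐ x ∂volume.restrict s, v x ^ 2 ≤ C ^ 2 * (1 + x ^ 2) ^ (-(1 / 2 + ε)) :=
    (ae_restrict_iff' hs).mpr (.of_forall hv_sq)
  have hv_meas : AEStronglyMeasurable v (volume.restrict s) :=
    (by fun_prop : Measurable fun x : ℝ => (1 + x ^ 2) ^ γ).aestronglyMeasurable.mul
      (continuous_abs.comp_aestronglyMeasurable hf)
  have hv : MemLp v 2 (volume.restrict s) :=
    (memLp_two_iff_integrable_sq hv_meas).mpr (hbound_int.mono' (hv_meas.pow 2)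
      (hv_sq_le.mono fun x hx => by rwa [Real.norm_of_nonneg (sq_nonneg _)]))
  have hv_norm : √(∫ x in s, v x ^ 2) ≤ C * √(√π * Gamma ε / Gamma (ε + 1 / 2)) := by
    calc √(∫ x in s, v x ^ 2) ≤ √(∫ x, C ^ 2 * (1 + x ^ 2) ^ (-(1 / 2 + ε))) := by
          refine sqrt_le_sqrt ((integral_mono_of_nonneg (.of_forall fun x => sq_nonneg _)
            hbound_int hv_sq_le).trans ?_)
          exact setIntegral_le_integral
            ((integrable_one_add_sq_rpow_neg (by linarith)).const_mul _)
            (.of_forall fun x => by positivity)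
      _ = C * √(√π * Gamma ε / Gamma (ε + 1 / 2)) := by
          rw [integral_const_mul, integral_one_add_sq_rpow_neg hε, sqrt_mul (sq_nonneg C),
            sqrt_sq hC]
  calc ∫ x in s, |f x| = ∫ x in s, u x * v x := by simp_rw [huv]
    _ ≤ √(∫ x in s, u x ^ 2) * √(∫ x in s, v x ^ 2) :=
        integral_mul_le_sqrt_mul_sqrt (.of_forall fun x => by positivity)
          (.of_forall fun x => by positivity) hu hv
    _ ≤ _ := by
        simp_rw [hu_sq]
        exact mul_le_mul_of_nonneg_left hv_norm (sqrt_nonneg _)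

theorem stmt_3_general (p q : ℝ → ℝ) (hp : Measurable p) (hq : Measurable q)
    (α : ℝ) (z₀ : ℝ) (C : ℝ)
    (hsup : ∀ x ≤ z₀, (1 + x ^ 2) ^ α * |p x - q x| ≤ C)
    (σ : ℝ) (hσ : 0 < σ) (ε : ℝ) (hε : ε ∈ Ioo 0 (2 * α - 2)) :
    (∀ z ≤ z₀,
      ∫ ζ in Iic z, (∫ x in Iic ζ, |p x - q x|) * Real.exp (σ * ζ)
        ≤ Real.exp (σ * z₀) * C *
          Real.sqrt (Real.sqrt Real.pi * Real.Gamma ε / Real.Gamma (ε + 1 / 2)) *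
          ∫ ζ in Iic z₀, Real.sqrt (∫ x in Iic ζ, (1 + x ^ 2) ^ (-(2 * α - 1 / 2 - ε)))) ∧
    IntegrableOn
      (fun ζ => Real.sqrt (∫ x in Iic ζ, (1 + x ^ 2) ^ (-(2 * α - 1 / 2 - ε)))) (Iic z₀) := by
  obtain ⟨hε0, hε2⟩ := hε
  have hC : 0 ≤ C := le_trans (by positivity) (hsup z₀ le_rfl)
  have htail := integrableOn_sqrt_integral_Iic_one_add_sq_rpow_neg (β := 2 * α - 1 / 2 - ε)
    (by linarith) z₀
  refine ⟨fun z hz => ?_, htail⟩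
  set K := √(√π * Gamma ε / Gamma (ε + 1 / 2))
  set G := fun ζ => √(∫ x in Iic ζ, (1 + x ^ 2) ^ (-(2 * α - 1 / 2 - ε)))
  have hpointwise : ∀ ζ ≤ z₀,
      (∫ x in Iic ζ, |p x - q x|) * exp (σ * ζ) ≤ exp (σ * z₀) * C * K * G ζ := fun ζ hζ =>
    calc (∫ x in Iic ζ, |p x - q x|) * exp (σ * ζ) ≤ G ζ * (C * K) * exp (σ * z₀) :=
          mul_le_mul (setIntegral_abs_le_of_rpow_mul_abs_le measurableSet_Iic
            (hp.sub hq).aestronglyMeasurable hC hε0 (by linarith)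
            fun x hx => hsup x (le_trans hx hζ))
            (exp_le_exp.mpr (by nlinarith)) (exp_pos _).le (by positivity)
      _ = exp (σ * z₀) * C * K * G ζ := by ring
  calc ∫ ζ in Iic z, (∫ x in Iic ζ, |p x - q x|) * exp (σ * ζ)
      ≤ ∫ ζ in Iic z, exp (σ * z₀) * C * K * G ζ :=
        integral_mono_of_nonneg
          (.of_forall fun ζ => mul_nonneg (integral_nonneg fun x => abs_nonneg _) (exp_pos _).le)
          ((htail.mono_set (Iic_subset_Iic.mpr hz)).const_mul _)
          ((ae_restrict_iff' measurableSet_Iic).mpr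
            (.of_forall fun ζ hζ => hpointwise ζ (le_trans hζ hz)))
    _ ≤ ∫ ζ in Iic z₀, exp (σ * z₀) * C * K * G ζ :=
        setIntegral_mono_set (htail.const_mul _) (.of_forall fun ζ => by positivity)
          (Iic_subset_Iic.mpr hz).eventuallyLE
    _ = exp (σ * z₀) * C * K * ∫ ζ in Iic z₀, G ζ := integral_const_mul _ _

/-- Cauchy–Schwarz estimate converting a weighted sup-norm density approximation into a
uniform option-price approximation. With `K_ε = (√π Γ(ε)/Γ(ε+1/2))^{1/2}`, for any
`z ≤ z₀` the weighted double integral of `|p − q|` is bounded by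
`e^{σz₀}·C·K_ε·∫_{-∞}^{z₀} (∫_{-∞}^{ζ} (1+x²)^{-(2α−1/2−ε)} dx)^{1/2} dζ`, and the
latter iterated integral is finite. -/
theorem stmt_3 (p q : ℝ → ℝ) (hp : Measurable p) (hq : Measurable q)
    (α : ℝ) (hα : 1 < α) (z₀ : ℝ) (C : ℝ)
    (hsup : ∀ x ≤ z₀, (1 + x ^ 2) ^ α * |p x - q x| ≤ C)
    (hpray : ∀ ζ : ℝ, IntegrableOn p (Iic ζ)) (hqray : ∀ ζ : ℝ, IntegrableOn q (Iic ζ))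
    (σ : ℝ) (hσ : 0 < σ) (ε : ℝ) (hε : ε ∈ Ioo 0 (2 * α - 2)) :
    (∀ z ≤ z₀,
      ∫ ζ in Iic z, (∫ x in Iic ζ, |p x - q x|) * Real.exp (σ * ζ)
        ≤ Real.exp (σ * z₀) * C *
          Real.sqrt (Real.sqrt Real.pi * Real.Gamma ε / Real.Gamma (ε + 1 / 2)) *
          ∫ ζ in Iic z₀, Real.sqrt (∫ x in Iic ζ, (1 + x ^ 2) ^ (-(2 * α - 1 / 2 - ε)))) ∧
    IntegrableOn
      (fun ζ => Real.sqrt (∫ x in Iic ζ, (1 + x ^ 2) ^ (-(2 * α - 1 / 2 - ε)))) (Iic z₀) :=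
  stmt_3_general p q hp hq α z₀ C hsup σ hσ ε hε
end

section
/- Let (v_t)_{t≥0} be a nonnegative measurable adapted process and B a Brownian motion, with M_θ = ∫_0^θ √(v_t) dB_t well-defined as an L² martingale, Z_θ = −(1/2)∫_0^θ v_t dt + M_θ, σ₀(θ)² = Var(Z_θ), and σ̃₀(θ)² = ∫_0^θ E[v_t] dt. Then |σ₀(θ)² − σ̃₀(θ)²| ≤ (1/4) Var(∫_0^θ v_t dt) + σ̃₀(θ) √(Var(∫_0^θ v_t dt)). -/
open MeasureTheory ProbabilityTheory Set

namespace ProbabilityTheory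

variable {Ω : Type*} [MeasurableSpace Ω] {μ : Measure Ω} [IsFiniteMeasure μ] {X Y : Ω → ℝ}

lemma variance_smul_add (hX : MemLp X 2 μ) (hY : MemLp Y 2 μ) (a : ℝ) :
    Var[a • X + Y; μ] = a ^ 2 * Var[X; μ] + 2 * a * cov[X, Y; μ] + Var[Y; μ] := by
  rw [variance_add (hX.const_smul a) hY, variance_smul, covariance_smul_left]
  ring

/-- Cauchy–Schwarz: `t ↦ Var[t • X + Y]` is a nonnegative quadratic, so its discriminant
is `≤ 0`. -/
lemma abs_covariance_le_sqrt_variance_mul (hX : MemLp X 2 μ) (hY : MemLp Y 2 μ) :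
    |cov[X, Y; μ]| ≤ √Var[X; μ] * √Var[Y; μ] := by
  have quadratic_nonneg : ∀ t : ℝ,
      0 ≤ Var[X; μ] * (t * t) + 2 * cov[X, Y; μ] * t + Var[Y; μ] := fun t => by
    have := variance_nonneg (t • X + Y) μ
    rw [variance_smul_add hX hY] at this
    linarith
  have discriminant_nonpos := discrim_le_zero quadratic_nonneg
  rw [discrim] at discriminant_nonpos
  rw [← Real.sqrt_mul (variance_nonneg X μ)]
  exact Real.abs_le_sqrt (by nlinarith)

lemma abs_variance_smul_add_sub_variance_le (hX : MemLp X 2 μ) (hY : MemLp Y 2 μ) (a : ℝ) :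
    |Var[a • X + Y; μ] - Var[Y; μ]| ≤
      a ^ 2 * Var[X; μ] + 2 * |a| * (√Var[X; μ] * √Var[Y; μ]) := by
  rw [variance_smul_add hX hY, add_sub_cancel_right]
  calc |a ^ 2 * Var[X; μ] + 2 * a * cov[X, Y; μ]|
      ≤ |a ^ 2 * Var[X; μ]| + |2 * a * cov[X, Y; μ]| := abs_add_le _ _
    _ = a ^ 2 * Var[X; μ] + 2 * |a| * |cov[X, Y; μ]| := by
      rw [abs_of_nonneg (mul_nonneg (sq_nonneg a) (variance_nonneg X μ)), abs_mul, abs_mul,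
        abs_two]
    _ ≤ a ^ 2 * Var[X; μ] + 2 * |a| * (√Var[X; μ] * √Var[Y; μ]) := by
      gcongr
      exact abs_covariance_le_sqrt_variance_mul hX hY

end ProbabilityTheory

theorem stmt_13_general {Ω : Type*} [MeasurableSpace Ω] (μ : Measure Ω) [IsProbabilityMeasure μ]
    (M V Z : Ω → ℝ) (hM2int : MeasureTheory.MemLp M 2 μ) (hV2int : MeasureTheory.MemLp V 2 μ)
    (hM0 : ∫ ω, M ω ∂μ = 0)
    (sigmaTildeSq : ℝ)
    (hM2 : ∫ ω, M ω ^ 2 ∂μ = sigmaTildeSq)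
    (hZ : ∀ ω, Z ω = -(1 / 2) * V ω + M ω) :
    |variance Z μ - sigmaTildeSq| ≤
      (1 / 4) * variance V μ + Real.sqrt sigmaTildeSq * Real.sqrt (variance V μ) := by
  have hZ_eq : Z = (-(1 / 2) : ℝ) • V + M := funext hZ
  have hVarM : Var[M; μ] = sigmaTildeSq := by
    rw [variance_eq_sub hM2int]
    simp only [Pi.pow_apply, hM0, hM2]
    ring
  have key := abs_variance_smul_add_sub_variance_le hV2int hM2int (-(1 / 2))
  rw [← hZ_eq, hVarM] at key
  calc |Var[Z; μ] - sigmaTildeSq|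
      ≤ (-(1 / 2)) ^ 2 * Var[V; μ] + 2 * |(-(1 / 2) : ℝ)| * (√Var[V; μ] * √sigmaTildeSq) :=
        key
    _ = 1 / 4 * Var[V; μ] + √sigmaTildeSq * √Var[V; μ] := by norm_num; ring

/-- With `M_θ = ∫_0^θ √v_t dB_t` an `L²` martingale increment (`E[M] = 0`,
`E[M²] = E[∫_0^θ v_t dt] = σ̃₀(θ)²`), `Z_θ = −(1/2)∫_0^θ v_t dt + M_θ`, and
`σ₀(θ)² = Var(Z_θ)`, one has
`|σ₀(θ)² − σ̃₀(θ)²| ≤ (1/4)Var(∫_0^θ v_t dt) + σ̃₀(θ)√Var(∫_0^θ v_t dt)`. -/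
theorem stmt_13 {Ω : Type*} [MeasurableSpace Ω] (μ : Measure Ω) [IsProbabilityMeasure μ]
    (θ : ℝ) (hθ : 0 < θ) (v : ℝ → Ω → ℝ) (hv : ∀ t ω, 0 ≤ v t ω)
    (hvmeas : Measurable (Function.uncurry v))
    (M V Z : Ω → ℝ) (hMmeas : Measurable M) (hM2int : MeasureTheory.MemLp M 2 μ) (hV2int : MeasureTheory.MemLp V 2 μ)
    (hM0 : ∫ ω, M ω ∂μ = 0)
    (hV : ∀ ω, V ω = ∫ t in Ioc 0 θ, v t ω)
    (sigmaTildeSq : ℝ) (hsigmaTildeSq : sigmaTildeSq = ∫ ω, V ω ∂μ)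
    (hM2 : ∫ ω, M ω ^ 2 ∂μ = sigmaTildeSq)
    (hZ : ∀ ω, Z ω = -(1 / 2) * V ω + M ω) :
    |variance Z μ - sigmaTildeSq| ≤
      (1 / 4) * variance V μ + Real.sqrt sigmaTildeSq * Real.sqrt (variance V μ) :=
  stmt_13_general μ M V Z hM2int hV2int hM0 sigmaTildeSq hM2 hZ
end
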